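/- Fix 0 < m ≤ L and let s, ℓ ∈ (0, L]. The two complex numbers ((1+β(s))/2)(1 − ℓ/L) ± sqrt( ((1+β(s))²/4)(1 − ℓ/L)² − β(s)(1 − ℓ/L) ) have nonzero imaginary part if and only if s < ℓ < L. If they have zero imaginary part, then ρ(s, ℓ) = ((1+β(s))/2)(1 − ℓ/L) + sqrt( ((1+β(s))²/4)(1 − ℓ/L)² − β(s)(1 − ℓ/L) ); if they have nonzero imaginary part, then ρ(s, ℓ) = sqrt( β(s)(1 − ℓ/L) ). -/

import Mathlib

/-- `β(s) = (√L − √s)/(√L + √s)`. -/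
noncomputable def momBeta (L s : ℝ) : ℝ :=
  (Real.sqrt L - Real.sqrt s) / (Real.sqrt L + Real.sqrt s)

/-- The complex square root of a real number: `√x` if `x ≥ 0`, `i√(−x)` otherwise. -/
noncomputable def csqrt (x : ℝ) : ℂ :=
  if 0 ≤ x then ((Real.sqrt x : ℝ) : ℂ) else Complex.I * ((Real.sqrt (-x) : ℝ) : ℂ)

/-- The discriminant `((1+β(s))²/4)(1 − ℓ/L)² − β(s)(1 − ℓ/L)`. -/
noncomputable def discr (L s ℓ : ℝ) : ℝ :=
  ((1 + momBeta L s) / 2) ^ 2 * (1 - ℓ / L) ^ 2 - momBeta L s * (1 - ℓ / L)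

/-- The eigenvalue `((1+β(s))/2)(1 − ℓ/L) + sqrt(discriminant)` of `G(s, ℓ)`. -/
noncomputable def eigP (L s ℓ : ℝ) : ℂ :=
  (((1 + momBeta L s) / 2 * (1 - ℓ / L) : ℝ) : ℂ) + csqrt (discr L s ℓ)

/-- The eigenvalue `((1+β(s))/2)(1 − ℓ/L) − sqrt(discriminant)` of `G(s, ℓ)`. -/
noncomputable def eigM (L s ℓ : ℝ) : ℂ :=
  (((1 + momBeta L s) / 2 * (1 - ℓ / L) : ℝ) : ℂ) - csqrt (discr L s ℓ)

/-- `ρ(s, ℓ)`: the maximum modulus of the two eigenvalues of `G(s, ℓ)`. -/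
noncomputable def specRho (L s ℓ : ℝ) : ℝ :=
  max ‖eigP L s ℓ‖ ‖eigM L s ℓ‖

/-!
Writing `c = ((1+β)/2)(1 − ℓ/L)`, the discriminant is `c² − β(1 − ℓ/L)`, which simplifies to
`(L − ℓ)(s − ℓ) / (L (√L + √s)²)`; so the eigenvalues `c ± √(c² − β(1 − ℓ/L))` are non-real
exactly when `s < ℓ < L`. They are then complex conjugates with common modulus
`√(c² + (β(1 − ℓ/L) − c²)) = √(β(1 − ℓ/L))`. In the real case `c ≥ 0`, so the `+`-root has the
larger modulus.
-/

lemma csqrt_of_nonneg {x : ℝ} (hx : 0 ≤ x) : csqrt x = (Real.sqrt x : ℂ) := if_pos hx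

lemma csqrt_of_neg {x : ℝ} (hx : x < 0) : csqrt x = Complex.I * (Real.sqrt (-x) : ℂ) :=
  if_neg hx.not_ge

lemma im_csqrt_ne_zero_iff {x : ℝ} : (csqrt x).im ≠ 0 ↔ x < 0 := by
  rcases lt_or_ge x 0 with hx | hx
  · simp [csqrt_of_neg hx, hx, (Real.sqrt_pos.2 (neg_pos.2 hx)).ne']
  · simp [csqrt_of_nonneg hx, hx.not_gt]

lemma im_add_csqrt_ne_zero_and_im_sub_csqrt_ne_zero_iff {c x : ℝ} :
    ((c + csqrt x : ℂ).im ≠ 0 ∧ (c - csqrt x : ℂ).im ≠ 0) ↔ x < 0 := by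
  simp only [Complex.add_im, Complex.sub_im, Complex.ofReal_im, zero_add, zero_sub, neg_ne_zero,
    and_self, im_csqrt_ne_zero_iff]

lemma norm_add_csqrt_of_neg (c : ℝ) {x : ℝ} (hx : x < 0) :
    ‖(c + csqrt x : ℂ)‖ = Real.sqrt (c ^ 2 - x) := by
  rw [csqrt_of_neg hx, mul_comm, Complex.norm_add_mul_I, Real.sq_sqrt (by linarith), sub_eq_add_neg]

lemma norm_sub_csqrt_of_neg (c : ℝ) {x : ℝ} (hx : x < 0) :
    ‖(c - csqrt x : ℂ)‖ = Real.sqrt (c ^ 2 - x) := by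
  rw [csqrt_of_neg hx, mul_comm, sub_eq_add_neg, ← neg_mul, ← Complex.ofReal_neg,
    Complex.norm_add_mul_I, neg_sq, Real.sq_sqrt (by linarith), sub_eq_add_neg]

lemma max_norm_add_sub_csqrt_of_nonneg {c x : ℝ} (hc : 0 ≤ c) (hx : 0 ≤ x) :
    max ‖(c + csqrt x : ℂ)‖ ‖(c - csqrt x : ℂ)‖ = c + Real.sqrt x := by
  have hsqrt := Real.sqrt_nonneg x
  rw [csqrt_of_nonneg hx, ← Complex.ofReal_add, ← Complex.ofReal_sub, Complex.norm_real,
    Complex.norm_real, Real.norm_of_nonneg (by positivity), Real.norm_eq_abs]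
  exact max_eq_left (abs_sub_le_iff.2 ⟨by linarith, by linarith⟩)

lemma momBeta_nonneg {L s : ℝ} (hsL : s ≤ L) : 0 ≤ momBeta L s :=
  div_nonneg (sub_nonneg.2 (Real.sqrt_le_sqrt hsL)) (by positivity)

lemma discr_eq_sq_sub (L s ℓ : ℝ) :
    discr L s ℓ = ((1 + momBeta L s) / 2 * (1 - ℓ / L)) ^ 2 - momBeta L s * (1 - ℓ / L) := by
  rw [discr]; ring

lemma discr_eq {L s : ℝ} (hL : 0 < L) (hs : 0 ≤ s) (ℓ : ℝ) :
    discr L s ℓ = (L - ℓ) * (s - ℓ) / (L * (Real.sqrt L + Real.sqrt s) ^ 2) := by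
  have hsum : 0 < Real.sqrt L + Real.sqrt s := by positivity
  have hL' : L = Real.sqrt L ^ 2 := (Real.sq_sqrt hL.le).symm
  have hs' : s = Real.sqrt s ^ 2 := (Real.sq_sqrt hs).symm
  rw [discr, momBeta]
  field_simp
  generalize Real.sqrt L = p at hL' hsum ⊢
  generalize Real.sqrt s = q at hs' hsum ⊢
  subst hL' hs'
  ring

lemma discr_neg_iff {L s : ℝ} (hs : 0 ≤ s) (hsL : s ≤ L) (hL : 0 < L) (ℓ : ℝ) :
    discr L s ℓ < 0 ↔ s < ℓ ∧ ℓ < L := by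
  have hden : 0 < L * (Real.sqrt L + Real.sqrt s) ^ 2 := by positivity
  rw [discr_eq hL hs, div_lt_iff₀ hden, zero_mul]
  constructor
  · intro h
    constructor <;> nlinarith
  · rintro ⟨hsl, hlL⟩
    nlinarith

theorem stmt10_general {L s ℓ : ℝ}
    (hs0 : 0 < s) (hsL : s ≤ L) (hlL : ℓ ≤ L) :
    (((eigP L s ℓ).im ≠ 0 ∧ (eigM L s ℓ).im ≠ 0) ↔ (s < ℓ ∧ ℓ < L)) ∧
    ((eigP L s ℓ).im = 0 ∧ (eigM L s ℓ).im = 0 →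
      specRho L s ℓ =
        (1 + momBeta L s) / 2 * (1 - ℓ / L) + Real.sqrt (discr L s ℓ)) ∧
    ((eigP L s ℓ).im ≠ 0 ∧ (eigM L s ℓ).im ≠ 0 →
      specRho L s ℓ = Real.sqrt (momBeta L s * (1 - ℓ / L))) := by
  have hL : 0 < L := hs0.trans_le hsL
  have hβ := momBeta_nonneg hsL
  have hc : 0 ≤ (1 + momBeta L s) / 2 * (1 - ℓ / L) :=
    mul_nonneg (by linarith) (sub_nonneg.2 (div_le_one_of_le₀ hlL hL.le))
  have him := im_add_csqrt_ne_zero_and_im_sub_csqrt_ne_zero_iff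
    (c := (1 + momBeta L s) / 2 * (1 - ℓ / L)) (x := discr L s ℓ)
  have hneg := discr_neg_iff hs0.le hsL hL ℓ
  refine ⟨him.trans hneg, fun hreal => ?_, fun hcplx => ?_⟩
  · have hx : 0 ≤ discr L s ℓ := not_lt.1 fun h => (him.2 h).1 hreal.1
    exact max_norm_add_sub_csqrt_of_nonneg hc hx
  · have hx := him.1 hcplx
    rw [specRho, eigP, eigM, norm_add_csqrt_of_neg _ hx, norm_sub_csqrt_of_neg _ hx, max_self,
      discr_eq_sq_sub, sub_sub_cancel]

/-- (Lemma `la:lem:rho-expression`.) For `s, ℓ ∈ (0, L]`, the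
two eigenvalues have nonzero imaginary part iff `s < ℓ < L`; in the real case
`ρ(s, ℓ)` is given by the `+`-root formula, and in the complex case
`ρ(s, ℓ) = √(β(s)(1 − ℓ/L))`. -/
theorem stmt10 {L m s ℓ : ℝ} (hm : 0 < m) (hmL : m ≤ L)
    (hs0 : 0 < s) (hsL : s ≤ L) (hl0 : 0 < ℓ) (hlL : ℓ ≤ L) :
    (((eigP L s ℓ).im ≠ 0 ∧ (eigM L s ℓ).im ≠ 0) ↔ (s < ℓ ∧ ℓ < L)) ∧
    ((eigP L s ℓ).im = 0 ∧ (eigM L s ℓ).im = 0 →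
      specRho L s ℓ =
        (1 + momBeta L s) / 2 * (1 - ℓ / L) + Real.sqrt (discr L s ℓ)) ∧
    ((eigP L s ℓ).im ≠ 0 ∧ (eigM L s ℓ).im ≠ 0 →
      specRho L s ℓ = Real.sqrt (momBeta L s * (1 - ℓ / L))) :=
  stmt10_general hs0 hsL hlL
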